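/- arXiv:hep-th/9411087 — 3 statements merged into one kernel-verified Lean document; each statement's English description precedes it below -/
import Mathlib

section
/- The R-matrix R = Σ_{i,j=1}^{n} q^{δ_{ij}} e_{ii} ⊗ e_{jj} + (q - q^{-1}) Σ_{i>j} e_{ij} ⊗ e_{ji} (an n²×n² matrix over ℂ, with e_{ij} the matrix units) satisfies the quantum Yang-Baxter equation R₁₂ R₁₃ R₂₃ = R₂₃ R₁₃ R₁₂, where R₁₂ = R ⊗ I, R₂₃ = I ⊗ R, and R₁₃ acts on the first and third tensor factors of ℂⁿ ⊗ ℂⁿ ⊗ ℂⁿ. -/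
set_option maxHeartbeats 0


open scoped Matrix

/-- The standard R-matrix of `GL_q(n, ℂ)` as a matrix on `ℂⁿ ⊗ ℂⁿ`,
with entries `R^{ij}_{kl} = q^{δ_{ij}} δ_{ik} δ_{jl} + (q - q⁻¹) δ_{il} δ_{jk} [i > j]`. -/
noncomputable def Rmat (n : ℕ) (q : ℂ) : Matrix (Fin n × Fin n) (Fin n × Fin n) ℂ :=
  fun p r =>
    (if p.1 = r.1 ∧ p.2 = r.2 then (if p.1 = p.2 then q else 1) else 0) +
    (if p.1 = r.2 ∧ p.2 = r.1 ∧ r.1 < p.1 then q - q⁻¹ else 0)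

/-- `R₁₂ = R ⊗ I` acting on the first two tensor factors of `ℂⁿ ⊗ ℂⁿ ⊗ ℂⁿ`. -/
noncomputable def R12 (n : ℕ) (q : ℂ) : Matrix (Fin n × Fin n × Fin n) (Fin n × Fin n × Fin n) ℂ :=
  fun p r => Rmat n q (p.1, p.2.1) (r.1, r.2.1) * (if p.2.2 = r.2.2 then 1 else 0)

/-- `R₂₃ = I ⊗ R` acting on the last two tensor factors of `ℂⁿ ⊗ ℂⁿ ⊗ ℂⁿ`. -/
noncomputable def R23 (n : ℕ) (q : ℂ) : Matrix (Fin n × Fin n × Fin n) (Fin n × Fin n × Fin n) ℂ :=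
  fun p r => (if p.1 = r.1 then 1 else 0) * Rmat n q (p.2.1, p.2.2) (r.2.1, r.2.2)

/-- `R₁₃` acting on the first and third tensor factors of `ℂⁿ ⊗ ℂⁿ ⊗ ℂⁿ`. -/
noncomputable def R13 (n : ℕ) (q : ℂ) : Matrix (Fin n × Fin n × Fin n) (Fin n × Fin n × Fin n) ℂ :=
  fun p r => Rmat n q (p.1, p.2.2) (r.1, r.2.2) * (if p.2.1 = r.2.1 then 1 else 0)

variable {n : ℕ} {q : ℂ}

lemma R12_eq (p s : Fin n × Fin n × Fin n) :
    R12 n q p s = (if s = p then (if p.1 = p.2.1 then q else 1) else 0) +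
      (if p.2.1 < p.1 ∧ s = (p.2.1, p.1, p.2.2) then q - q⁻¹ else 0) := by
  obtain ⟨a, b, c⟩ := p; obtain ⟨u, v, w⟩ := s
  simp only [R12, Rmat, Prod.mk.injEq]
  split_ifs <;> (try ring) <;> (exfalso; omega)

lemma R23_eq (p s : Fin n × Fin n × Fin n) :
    R23 n q p s = (if s = p then (if p.2.1 = p.2.2 then q else 1) else 0) +
      (if p.2.2 < p.2.1 ∧ s = (p.1, p.2.2, p.2.1) then q - q⁻¹ else 0) := by
  obtain ⟨a, b, c⟩ := p; obtain ⟨u, v, w⟩ := s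
  simp only [R23, Rmat, Prod.mk.injEq]
  split_ifs <;> (try ring) <;> (exfalso; omega)

lemma R12_mul (M : Matrix (Fin n × Fin n × Fin n) (Fin n × Fin n × Fin n) ℂ)
    (p r : Fin n × Fin n × Fin n) :
    (R12 n q * M) p r = (if p.1 = p.2.1 then q else 1) * M p r +
      (if p.2.1 < p.1 then (q - q⁻¹) * M (p.2.1, p.1, p.2.2) r else 0) := by
  rw [Matrix.mul_apply]
  have h : ∀ s, R12 n q p s * M s r =
      (if s = p then (if p.1 = p.2.1 then q else 1) * M s r else 0) +
      (if p.2.1 < p.1 then (if s = (p.2.1, p.1, p.2.2) then (q - q⁻¹) * M s r else 0) else 0) := by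
    intro s; rw [R12_eq]; simp only [Prod.ext_iff] at *; split_ifs <;> (try ring) <;> (exfalso; omega)
  simp only [h, Finset.sum_add_distrib, Finset.sum_ite_eq', Finset.mem_univ, if_true]
  by_cases hlt : p.2.1 < p.1 <;>
    simp [hlt, Finset.sum_ite_eq'] <;> split_ifs <;> ring

lemma mul_R23 (M : Matrix (Fin n × Fin n × Fin n) (Fin n × Fin n × Fin n) ℂ)
    (p r : Fin n × Fin n × Fin n) :
    (M * R23 n q) p r = (if r.2.1 = r.2.2 then q else 1) * M p r +
      (if r.2.1 < r.2.2 then (q - q⁻¹) * M p (r.1, r.2.2, r.2.1) else 0) := by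
  rw [Matrix.mul_apply]
  have h : ∀ t, M p t * R23 n q t r =
      (if t = r then (if r.2.1 = r.2.2 then q else 1) * M p t else 0) +
      (if r.2.1 < r.2.2 then (if t = (r.1, r.2.2, r.2.1) then (q - q⁻¹) * M p t else 0) else 0) := by
    intro t
    have : R23 n q t r = (if t = r then (if r.2.1 = r.2.2 then q else 1) else 0) +
        (if r.2.1 < r.2.2 ∧ t = (r.1, r.2.2, r.2.1) then q - q⁻¹ else 0) := by
      obtain ⟨a, b, c⟩ := t; obtain ⟨u, v, w⟩ := r
      simp only [R23, Rmat, Prod.mk.injEq]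
      split_ifs <;> (try ring) <;> (exfalso; omega)
    rw [this]; simp only [Prod.ext_iff] at *; split_ifs <;> (try ring) <;> (exfalso; omega)
  simp only [h, Finset.sum_add_distrib, Finset.sum_ite_eq', Finset.mem_univ, if_true]
  by_cases hlt : r.2.1 < r.2.2 <;> simp [hlt, Finset.sum_ite_eq'] <;> split_ifs <;> ring

lemma R23_mul (M : Matrix (Fin n × Fin n × Fin n) (Fin n × Fin n × Fin n) ℂ)
    (p r : Fin n × Fin n × Fin n) :
    (R23 n q * M) p r = (if p.2.1 = p.2.2 then q else 1) * M p r +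
      (if p.2.2 < p.2.1 then (q - q⁻¹) * M (p.1, p.2.2, p.2.1) r else 0) := by
  rw [Matrix.mul_apply]
  have h : ∀ s, R23 n q p s * M s r =
      (if s = p then (if p.2.1 = p.2.2 then q else 1) * M s r else 0) +
      (if p.2.2 < p.2.1 then (if s = (p.1, p.2.2, p.2.1) then (q - q⁻¹) * M s r else 0) else 0) := by
    intro s; rw [R23_eq]; simp only [Prod.ext_iff] at *; split_ifs <;> (try ring) <;> (exfalso; omega)
  simp only [h, Finset.sum_add_distrib, Finset.sum_ite_eq', Finset.mem_univ, if_true]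
  by_cases hlt : p.2.2 < p.2.1 <;> simp [hlt, Finset.sum_ite_eq'] <;> split_ifs <;> ring

lemma mul_R12 (M : Matrix (Fin n × Fin n × Fin n) (Fin n × Fin n × Fin n) ℂ)
    (p r : Fin n × Fin n × Fin n) :
    (M * R12 n q) p r = (if r.1 = r.2.1 then q else 1) * M p r +
      (if r.1 < r.2.1 then (q - q⁻¹) * M p (r.2.1, r.1, r.2.2) else 0) := by
  rw [Matrix.mul_apply]
  have h : ∀ t, M p t * R12 n q t r =
      (if t = r then (if r.1 = r.2.1 then q else 1) * M p t else 0) +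
      (if r.1 < r.2.1 then (if t = (r.2.1, r.1, r.2.2) then (q - q⁻¹) * M p t else 0) else 0) := by
    intro t
    have : R12 n q t r = (if t = r then (if r.1 = r.2.1 then q else 1) else 0) +
        (if r.1 < r.2.1 ∧ t = (r.2.1, r.1, r.2.2) then q - q⁻¹ else 0) := by
      obtain ⟨a, b, c⟩ := t; obtain ⟨u, v, w⟩ := r
      simp only [R12, Rmat, Prod.mk.injEq]
      split_ifs <;> (try ring) <;> (exfalso; omega)
    rw [this]; simp only [Prod.ext_iff] at *; split_ifs <;> (try ring) <;> (exfalso; omega)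
  simp only [h, Finset.sum_add_distrib, Finset.sum_ite_eq', Finset.mem_univ, if_true]
  by_cases hlt : r.1 < r.2.1 <;> simp [hlt, Finset.sum_ite_eq'] <;> split_ifs <;> ring

/-- The R-matrix of `GL_q(n, ℂ)` satisfies the quantum Yang-Baxter equation
`R₁₂ R₁₃ R₂₃ = R₂₃ R₁₃ R₁₂`. -/
theorem rmat_quantum_yang_baxter (n : ℕ) (hn : 2 ≤ n) (q : ℂ) (hq : q ≠ 0) :
    R12 n q * R13 n q * R23 n q = R23 n q * R13 n q * R12 n q := by
  ext ⟨a, b, c⟩ ⟨x, y, z⟩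
  rw [mul_R23, mul_R12]
  simp only [R12_mul, R23_mul]
  simp only [R13, Rmat]
  rcases eq_or_ne a x with h1 | h1 <;> rcases eq_or_ne a y with h2 | h2 <;>
    rcases eq_or_ne a z with h3 | h3 <;> rcases eq_or_ne b x with h4 | h4 <;>
    rcases eq_or_ne b y with h5 | h5 <;> rcases eq_or_ne b z with h6 | h6 <;>
    rcases eq_or_ne c x with h7 | h7 <;> rcases eq_or_ne c y with h8 | h8 <;>
    rcases eq_or_ne c z with h9 | h9 <;>
    subst_vars <;>
    simp only [*, ne_eq, eq_self_iff_true, if_true, if_false, true_and, and_true, false_and,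
      and_false, ite_true, ite_false, lt_self_iff_false, lt_irrefl,
      mul_zero, zero_mul, mul_one, one_mul, add_zero, zero_add] <;>
    (try split_ifs) <;>
    first | rfl | (exfalso; omega) | ring1 | (field_simp; ring1)
end

section
/- In Fun_q(GL(n,ℂ)) with invertible antipode S, the inverse antipode on the generators is given by conjugation with the diagonal matrix D₀ = diag(1, q², ..., q^{2(n-1)}): S^{-1}(Z) = D₀^{-1} S(Z) D₀, i.e. S^{-1}(z^i_j) = q^{2(j-i)} S(z^i_j). -/
/-- In `Fun_q(GL(n,ℂ))` with invertible antipode `S`, the inverse antipode on the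
generators is given by conjugation with `D₀ = diag(1, q², …, q^{2(n-1)})`:
`S⁻¹(z i j) = q^{2(j-i)} S(z i j)`. -/
theorem inverse_antipode_formula (A : Type*) [Ring A] [Algebra ℂ A]
    (n : ℕ) (q : ℂ) (hq : q ≠ 0) (z : Fin n → Fin n → A)
    (S Sinv : A → A)
    (hSadd : ∀ a b : A, S (a + b) = S a + S b)
    (hSsmul : ∀ (c : ℂ) (a : A), S (c • a) = c • S a)
    (hSmul : ∀ a b : A, S (a * b) = S b * S a)
    (hS1 : S 1 = 1)
    (hSinvS : ∀ a : A, Sinv (S a) = a)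
    (hSSinv : ∀ a : A, S (Sinv a) = a)
    -- the GL_q(n,ℂ) commutation relations R Z₁ Z₂ = Z₂ Z₁ R in explicit form:
    (h1 : ∀ i j k : Fin n, j < k → z i j * z i k = q • (z i k * z i j))
    (h2 : ∀ i k j : Fin n, i < k → z i j * z k j = q • (z k j * z i j))
    (h3 : ∀ i k j l : Fin n, i < k → l < j → z i j * z k l = z k l * z i j)
    (h4 : ∀ i k j l : Fin n, i < k → j < l →
        z i j * z k l = z k l * z i j + (q - q⁻¹) • (z k j * z i l))
    -- S(Z) Z = Z S(Z) = 1: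
    (hSZ1 : ∀ i j : Fin n, ∑ k, S (z i k) * z k j = if i = j then 1 else 0)
    (hSZ2 : ∀ i j : Fin n, ∑ k, z i k * S (z k j) = if i = j then 1 else 0) :
    ∀ i j : Fin n, Sinv (z i j) = (q ^ (2 * ((j : ℤ) - (i : ℤ)))) • S (z i j) := by
  classical
  -- basic consequences of the antipode axioms
  have hS0 : S 0 = 0 := by
    have h := hSadd 0 0
    rw [add_zero] at h
    exact (left_eq_add.mp h)
  have hSsum : ∀ (s : Finset (Fin n)) (f : Fin n → A),
      S (∑ x ∈ s, f x) = ∑ x ∈ s, S (f x) := by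
    intro s f
    induction s using Finset.cons_induction with
    | empty => simpa using hS0
    | cons a s ha ih => rw [Finset.sum_cons, hSadd, ih, Finset.sum_cons]
  have hSinv_smul : ∀ (c : ℂ) (a : A), Sinv (c • a) = c • Sinv a := by
    intro c a
    have h : S (c • Sinv a) = c • a := by rw [hSsmul, hSSinv]
    calc Sinv (c • a) = Sinv (S (c • Sinv a)) := by rw [h]
      _ = c • Sinv a := hSinvS _
  -- the FRT relations in R-matrix component form
  have hF : ∀ i j k l : Fin n,
      (if i = j then q else 1) • (z i k * z j l)
        + (if j < i then (q - q⁻¹) else 0) • (z j k * z i l)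
      = (if k = l then q else 1) • (z j l * z i k)
        + (if k < l then (q - q⁻¹) else 0) • (z j k * z i l) := by
    intro i j k l
    rcases lt_trichotomy i j with hij | hij | hij <;>
      rcases lt_trichotomy k l with hkl | hkl | hkl
    · simp only [if_neg hij.ne, if_neg (asymm hij), if_neg hkl.ne, if_pos hkl, one_smul,
        zero_smul, add_zero]
      rw [h4 i j k l hij hkl]
    · subst hkl
      simp only [if_neg hij.ne, if_neg (asymm hij), eq_self_iff_true, if_true,
        if_neg (lt_irrefl k), one_smul, zero_smul, add_zero]
      rw [h2 i j k hij]
    · simp only [if_neg hij.ne, if_neg (asymm hij), if_neg (ne_of_gt hkl), if_neg (asymm hkl),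
        one_smul, zero_smul, add_zero]
      rw [h3 i j k l hij hkl]
    · subst hij
      simp only [eq_self_iff_true, if_true, if_neg (lt_irrefl i), if_neg hkl.ne, if_pos hkl,
        one_smul, zero_smul, add_zero]
      rw [h1 i k l hkl]
      match_scalars <;> field_simp <;> try ring
    · subst hij; subst hkl
      simp only [if_neg (lt_irrefl i), if_neg (lt_irrefl k), zero_smul, add_zero]
    · subst hij
      simp only [eq_self_iff_true, if_true, if_neg (lt_irrefl i), if_neg (ne_of_gt hkl),
        if_neg (asymm hkl), one_smul, zero_smul, add_zero]
      rw [h1 i l k hkl]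
    · simp only [if_neg (ne_of_gt hij), if_pos hij, if_neg hkl.ne, if_pos hkl, one_smul]
      rw [h3 j i l k hij hkl]
    · subst hkl
      simp only [if_neg (ne_of_gt hij), if_pos hij, eq_self_iff_true, if_true,
        if_neg (lt_irrefl k), zero_smul, add_zero, one_smul]
      rw [h2 j i k hij, smul_smul]
      match_scalars <;> field_simp <;> try ring
    · simp only [if_neg (ne_of_gt hij), if_pos hij, if_neg (ne_of_gt hkl), if_neg (asymm hkl),
        one_smul, zero_smul, add_zero]
      rw [h4 j i l k hij hkl, h3 j i k l hij hkl]
  -- the exchange relations between S(z) and z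
  have hE : ∀ i J k l : Fin n,
      (if i = l then q else 1) • (S (z J l) * z i k)
        + (if i = l then (q - q⁻¹) else 0) • (∑ p, if p < i then S (z J p) * z p k else 0)
      = (if k = J then q else 1) • (z i k * S (z J l))
        + (if k = J then (q - q⁻¹) else 0) • (∑ r, if k < r then z i r * S (z r l) else 0) := by
    intro i J k l
    have EqL : (∑ p, ∑ r, S (z J p) *
          (((if i = p then q else 1) • (z i k * z p r)
            + (if p < i then (q - q⁻¹) else 0) • (z p k * z i r)) * S (z r l)))
        = (if i = l then q else 1) • (S (z J l) * z i k)
          + (if i = l then (q - q⁻¹) else 0) • (∑ p, if p < i then S (z J p) * z p k else 0) := by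
      have step1 : ∀ p : Fin n, (∑ r, S (z J p) *
          (((if i = p then q else 1) • (z i k * z p r)
            + (if p < i then (q - q⁻¹) else 0) • (z p k * z i r)) * S (z r l)))
          = (if i = p then q else 1) • ((S (z J p) * z i k) * (if p = l then (1:A) else 0))
            + (if p < i then (q - q⁻¹) else 0) •
                ((S (z J p) * z p k) * (if i = l then (1:A) else 0)) := by
        intro p
        rw [← hSZ2 p l, ← hSZ2 i l, Finset.mul_sum, Finset.mul_sum,
          Finset.smul_sum, Finset.smul_sum, ← Finset.sum_add_distrib]
        exact Finset.sum_congr rfl fun r _ => by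
          simp only [add_mul, smul_mul_assoc, mul_add, mul_smul_comm, mul_assoc]
      rw [Finset.sum_congr rfl fun p _ => step1 p]
      rw [Finset.sum_add_distrib]
      congr 1
      · simp only [mul_ite, mul_one, mul_zero, smul_ite, smul_zero]
        rw [Finset.sum_ite_eq' Finset.univ l
          (fun p => (if i = p then q else 1) • (S (z J p) * z i k))]
        simp
      · by_cases hil : i = l
        · simp only [hil, if_true, eq_self_iff_true, mul_one, Finset.smul_sum]
          refine Finset.sum_congr rfl fun p _ => ?_
          split <;> simp
        · simp only [hil, if_false, mul_zero, smul_zero, Finset.sum_const_zero, zero_smul]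
    have EqR : (∑ p, ∑ r, S (z J p) *
          (((if i = p then q else 1) • (z i k * z p r)
            + (if p < i then (q - q⁻¹) else 0) • (z p k * z i r)) * S (z r l)))
        = (if k = J then q else 1) • (z i k * S (z J l))
          + (if k = J then (q - q⁻¹) else 0) •
              (∑ r, if k < r then z i r * S (z r l) else 0) := by
      have step0 : ∀ p r : Fin n, S (z J p) *
          (((if i = p then q else 1) • (z i k * z p r)
            + (if p < i then (q - q⁻¹) else 0) • (z p k * z i r)) * S (z r l))
          = S (z J p) *
          (((if k = r then q else 1) • (z p r * z i k)
            + (if k < r then (q - q⁻¹) else 0) • (z p k * z i r)) * S (z r l)) := by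
        intro p r
        rw [hF i p k r]
      rw [Finset.sum_congr rfl fun p _ => Finset.sum_congr rfl fun r _ => step0 p r]
      rw [Finset.sum_comm]
      have step2 : ∀ r : Fin n, (∑ p, S (z J p) *
          (((if k = r then q else 1) • (z p r * z i k)
            + (if k < r then (q - q⁻¹) else 0) • (z p k * z i r)) * S (z r l)))
          = (if k = r then q else 1) • ((if J = r then (1:A) else 0) * (z i k * S (z r l)))
            + (if k < r then (q - q⁻¹) else 0) •
                ((if J = k then (1:A) else 0) * (z i r * S (z r l))) := by
        intro r
        rw [← hSZ1 J r, ← hSZ1 J k, Finset.sum_mul, Finset.sum_mul,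
          Finset.smul_sum, Finset.smul_sum, ← Finset.sum_add_distrib]
        exact Finset.sum_congr rfl fun p _ => by
          simp only [add_mul, smul_mul_assoc, mul_add, mul_smul_comm, mul_assoc]
      rw [Finset.sum_congr rfl fun r _ => step2 r]
      rw [Finset.sum_add_distrib]
      congr 1
      · simp only [ite_mul, one_mul, zero_mul, smul_ite, smul_zero]
        rw [Finset.sum_ite_eq Finset.univ J
          (fun r => (if k = r then q else 1) • (z i k * S (z r l)))]
        simp [eq_comm]
      · by_cases hkJ : k = J
        · simp only [← hkJ, if_true, eq_self_iff_true, one_mul, Finset.smul_sum]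
          refine Finset.sum_congr rfl fun r _ => ?_
          split <;> simp
        · simp only [Ne.symm hkJ, if_false, zero_mul, smul_zero, Finset.sum_const_zero,
            zero_smul, hkJ]
    rw [← EqL, EqR]
  -- the geometric-series identity
  have hgeo : ∀ m : ℕ, (q - q⁻¹) * (∑ k ∈ Finset.range m, q ^ (-2 * (k : ℤ)))
      = q - q ^ (1 - 2 * (m : ℤ)) := by
    intro m
    induction m with
    | zero => simp
    | succ m IH =>
      rw [Finset.sum_range_succ, mul_add, IH]
      have e1 : q ^ (1 - 2 * (m : ℤ)) = q * q ^ (-2 * (m : ℤ)) := by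
        rw [show (1 - 2 * (m : ℤ)) = 1 + (-2 * (m : ℤ)) by ring, zpow_add₀ hq, zpow_one]
      have e2 : q ^ (1 - 2 * ((m : ℤ) + 1)) = q⁻¹ * q ^ (-2 * (m : ℤ)) := by
        rw [show (1 - 2 * ((m : ℤ) + 1)) = (-1) + (-2 * (m : ℤ)) by ring, zpow_add₀ hq,
          zpow_neg_one]
      push_cast
      linear_combination -e1 + e2
  -- partial sums of weights as range sums
  have hrange : ∀ m : Fin n, (∑ K, if K < m then q ^ (-2 * (K : ℤ)) else 0)
      = ∑ k ∈ Finset.range (m : ℕ), q ^ (-2 * (k : ℤ)) := by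
    intro m
    calc (∑ K, if K < m then q ^ (-2 * (K : ℤ)) else 0)
        = ∑ K : Fin n, (fun k : ℕ => if k < (m : ℕ) then q ^ (-2 * (k : ℤ)) else 0) (K : ℕ) := by
          refine Finset.sum_congr rfl fun K _ => ?_
          exact if_congr Fin.lt_def (by norm_num) rfl
      _ = ∑ k ∈ Finset.range n, (fun k : ℕ => if k < (m : ℕ) then q ^ (-2 * (k : ℤ)) else 0) k :=
          Fin.sum_univ_eq_sum_range (fun k : ℕ => if k < (m : ℕ) then q ^ (-2 * (k : ℤ)) else 0) n
      _ = ∑ k ∈ Finset.range (m : ℕ), q ^ (-2 * (k : ℤ)) := by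
          rw [Finset.sum_ite, Finset.sum_const_zero, add_zero]
          congr 1
          ext a
          simp only [Finset.mem_filter, Finset.mem_range]
          exact ⟨fun h => h.2, fun h => ⟨h.trans m.isLt, h⟩⟩
  -- the key scalar identity
  have hscal : ∀ r : Fin n, q * q ^ (-2 * (r : ℤ))
      + (q - q⁻¹) * (∑ K, if K < r then q ^ (-2 * (K : ℤ)) else 0) = q := by
    intro r
    rw [hrange r, hgeo (r : ℕ)]
    have e1 : q * q ^ (-2 * (r : ℤ)) = q ^ (1 - 2 * ((r : ℕ) : ℤ)) := by
      rw [show (1 - 2 * ((r : ℕ) : ℤ)) = 1 + (-2 * (r : ℤ)) by push_cast; ring,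
        zpow_add₀ hq, zpow_one]
    linear_combination e1
  -- the master weighted identity
  have hM : ∀ i j : Fin n,
      (if i = j then q else 1) • (∑ K : Fin n, (q ^ (-2 * (K : ℤ))) • (S (z K j) * z i K))
        + (if i = j then (q - q⁻¹) else 0) •
            (∑ p, if p < i then (∑ K : Fin n, (q ^ (-2 * (K : ℤ))) • (S (z K p) * z p K)) else 0)
      = q • (if i = j then (1 : A) else 0) := by
    intro i j
    have sum_eq := Finset.sum_congr rfl (fun (K : Fin n) (_ : K ∈ Finset.univ) =>
      congrArg (fun x : A => (q ^ (-2 * (K : ℤ))) • x) (hE i K K j))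
    have lhs_eq : (∑ K : Fin n, (q ^ (-2 * (K : ℤ))) • ((if i = j then q else 1) • (S (z K j) * z i K)
          + (if i = j then (q - q⁻¹) else 0) • (∑ p, if p < i then S (z K p) * z p K else 0)))
        = (if i = j then q else 1) • (∑ K : Fin n, (q ^ (-2 * (K : ℤ))) • (S (z K j) * z i K))
          + (if i = j then (q - q⁻¹) else 0) •
              (∑ p, if p < i then (∑ K : Fin n, (q ^ (-2 * (K : ℤ))) • (S (z K p) * z p K)) else 0) := by
      rw [Finset.sum_congr rfl (fun (K : Fin n) (_ : K ∈ Finset.univ) => show _ =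
          (if i = j then q else 1) • ((q ^ (-2 * (K : ℤ))) • (S (z K j) * z i K))
            + (if i = j then (q - q⁻¹) else 0) •
                ((q ^ (-2 * (K : ℤ))) • ∑ p, if p < i then S (z K p) * z p K else 0) from by
        rw [smul_add]; congr 1 <;> exact smul_comm _ _ _)]
      rw [Finset.sum_add_distrib, ← Finset.smul_sum, ← Finset.smul_sum]
      congr 1
      have swap : (∑ K : Fin n, (q ^ (-2 * (K : ℤ))) • ∑ p, if p < i then S (z K p) * z p K else 0)
          = ∑ p, if p < i then (∑ K : Fin n, (q ^ (-2 * (K : ℤ))) • (S (z K p) * z p K)) else 0 := by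
        calc (∑ K : Fin n, (q ^ (-2 * (K : ℤ))) • ∑ p, if p < i then S (z K p) * z p K else 0)
            = ∑ K : Fin n, ∑ p, (if p < i then (q ^ (-2 * (K : ℤ))) • (S (z K p) * z p K) else 0) := by
              refine Finset.sum_congr rfl fun K _ => ?_
              rw [Finset.smul_sum]
              exact Finset.sum_congr rfl fun p _ => by split <;> simp
          _ = ∑ p, ∑ K : Fin n, (if p < i then (q ^ (-2 * (K : ℤ))) • (S (z K p) * z p K) else 0) :=
              Finset.sum_comm
          _ = ∑ p, if p < i then (∑ K : Fin n, (q ^ (-2 * (K : ℤ))) • (S (z K p) * z p K)) else 0 := by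
              refine Finset.sum_congr rfl fun p _ => ?_
              split <;> simp
      rw [swap]
    have rhs_eq : (∑ K : Fin n, (q ^ (-2 * (K : ℤ))) • ((if K = K then q else 1) • (z i K * S (z K j))
          + (if K = K then (q - q⁻¹) else 0) •
              (∑ r, if K < r then z i r * S (z r j) else 0)))
        = q • (if i = j then (1 : A) else 0) := by
      calc (∑ K : Fin n, (q ^ (-2 * (K : ℤ))) • ((if K = K then q else 1) • (z i K * S (z K j))
            + (if K = K then (q - q⁻¹) else 0) •
                (∑ r, if K < r then z i r * S (z r j) else 0)))
          = ∑ K : Fin n, ((q * q ^ (-2 * (K : ℤ))) • (z i K * S (z K j))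
              + ∑ r, (if K < r then ((q - q⁻¹) * q ^ (-2 * (K : ℤ))) • (z i r * S (z r j))
                  else 0)) := by
            refine Finset.sum_congr rfl fun K _ => ?_
            rw [if_pos rfl, if_pos rfl, smul_add, smul_smul, smul_smul,
              mul_comm (q ^ (-2 * (K : ℤ))) q, mul_comm (q ^ (-2 * (K : ℤ))) (q - q⁻¹),
              Finset.smul_sum]
            congr 1
            refine Finset.sum_congr rfl fun r _ => ?_
            split <;> simp [smul_smul]
        _ = ∑ K : Fin n, (q * q ^ (-2 * (K : ℤ))) • (z i K * S (z K j))
              + ∑ r, ∑ K : Fin n, (if K < r then ((q - q⁻¹) * q ^ (-2 * (K : ℤ))) •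
                  (z i r * S (z r j)) else 0) := by
            rw [Finset.sum_add_distrib]
            congr 1
            exact Finset.sum_comm
        _ = ∑ r : Fin n, ((q * q ^ (-2 * (r : ℤ)))
              + (q - q⁻¹) * (∑ K, if K < r then q ^ (-2 * (K : ℤ)) else 0)) •
                (z i r * S (z r j)) := by
            rw [← Finset.sum_add_distrib]
            refine Finset.sum_congr rfl fun r _ => ?_
            rw [add_smul]
            congr 1
            rw [Finset.mul_sum, Finset.sum_smul]
            refine Finset.sum_congr rfl fun K _ => ?_
            split <;> simp
        _ = ∑ r, q • (z i r * S (z r j)) := by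
            refine Finset.sum_congr rfl fun r _ => ?_
            rw [hscal r]
        _ = q • (if i = j then (1 : A) else 0) := by rw [← Finset.smul_sum, hSZ2]
    rw [lhs_eq, rhs_eq] at sum_eq
    exact sum_eq
  -- the weighted second inversion identity
  have hT : ∀ i j : Fin n, (∑ K : Fin n, (q ^ (-2 * (K : ℤ))) • (S (z K j) * z i K))
      = if i = j then (q ^ (-2 * (i : ℤ))) • (1 : A) else 0 := by
    have hdiag : ∀ m : ℕ, ∀ a : Fin n, (a : ℕ) = m →
        (∑ K : Fin n, (q ^ (-2 * (K : ℤ))) • (S (z K a) * z a K)) = (q ^ (-2 * (a : ℤ))) • (1 : A) := by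
      intro m
      induction m using Nat.strong_induction_on with
      | _ m ih =>
        intro a ha
        have hMa := hM a a
        simp only [eq_self_iff_true, if_true] at hMa
        have hsub : (∑ p, if p < a then (∑ K : Fin n, (q ^ (-2 * (K : ℤ))) • (S (z K p) * z p K)) else 0)
            = (∑ p, if p < a then q ^ (-2 * (p : ℤ)) else 0) • (1 : A) := by
          rw [Finset.sum_smul]
          refine Finset.sum_congr rfl fun p _ => ?_
          split_ifs with hp
          · exact ih (p : ℕ) (by rw [← ha]; exact hp) p rfl
          · simp
        rw [hsub, smul_smul] at hMa
        have hq1 : q • (1 : A) = (q * q ^ (-2 * (a : ℤ))) • (1 : A)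
            + ((q - q⁻¹) * (∑ p, if p < a then q ^ (-2 * (p : ℤ)) else 0)) • 1 := by
          rw [← add_smul, hscal a]
        rw [hq1] at hMa
        have hMc := add_right_cancel hMa
        have h2 : q • (∑ K : Fin n, (q ^ (-2 * (K : ℤ))) • (S (z K a) * z a K))
            = q • ((q ^ (-2 * (a : ℤ))) • (1 : A)) := by
          rw [hMc, smul_smul]
        exact smul_right_injective A hq h2
    intro i j
    by_cases hij : i = j
    · subst hij
      rw [if_pos rfl]
      exact hdiag (i : ℕ) i rfl
    · rw [if_neg hij]
      have hMij := hM i j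
      simp only [if_neg hij] at hMij
      rw [one_smul, zero_smul, add_zero, smul_zero] at hMij
      exact hMij
  -- apply S to the inversion relations
  have hb : ∀ t j : Fin n,
      (∑ K, S (S (z K j)) * S (z t K)) = if t = j then (1 : A) else 0 := by
    intro t j
    have h := congrArg S (hSZ2 t j)
    rw [hSsum] at h
    rw [Finset.sum_congr rfl (fun K (_ : K ∈ Finset.univ) => hSmul (z t K) (S (z K j)))] at h
    rw [h]
    split_ifs
    · exact hS1
    · exact hS0
  -- the square of the antipode on generators
  have hSS : ∀ c j : Fin n, S (S (z c j)) = (q ^ (2 * ((c : ℤ) - (j : ℤ)))) • z c j := by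
    have key1 : ∀ K c : Fin n,
        (∑ t, S (z t K) * ((q ^ (2 * ((c : ℤ) - (t : ℤ)))) • z c t))
          = if c = K then (1:A) else 0 := by
      intro K c
      have e : ∀ t : Fin n, S (z t K) * ((q ^ (2 * ((c : ℤ) - (t : ℤ)))) • z c t)
          = (q ^ (2 * (c : ℤ))) • ((q ^ (-2 * (t : ℤ))) • (S (z t K) * z c t)) := by
        intro t
        rw [mul_smul_comm, smul_smul, ← zpow_add₀ hq]
        congr 2
        ring
      rw [Finset.sum_congr rfl fun t _ => e t, ← Finset.smul_sum, hT c K]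
      split_ifs with h
      · rw [smul_smul, ← zpow_add₀ hq]
        rw [show (2 * (c : ℤ) + -2 * (c : ℤ)) = 0 by ring, zpow_zero, one_smul]
      · rw [smul_zero]
    intro c j
    calc S (S (z c j))
        = ∑ K, S (S (z K j)) * (if c = K then (1:A) else 0) := by
          rw [Finset.sum_congr rfl (fun K (_ : K ∈ Finset.univ) => show _ =
            if c = K then S (S (z K j)) else 0 from by rw [mul_ite, mul_one, mul_zero])]
          rw [Finset.sum_ite_eq Finset.univ c (fun K => S (S (z K j)))]
          simp
      _ = ∑ K, S (S (z K j)) * (∑ t, S (z t K) * ((q ^ (2 * ((c : ℤ) - (t : ℤ)))) • z c t)) := by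
          refine Finset.sum_congr rfl fun K _ => ?_
          rw [key1 K c]
      _ = ∑ t, (∑ K, S (S (z K j)) * S (z t K)) * ((q ^ (2 * ((c : ℤ) - (t : ℤ)))) • z c t) := by
          rw [Finset.sum_congr rfl (fun K (_ : K ∈ Finset.univ) => Finset.mul_sum Finset.univ
            (fun t => S (z t K) * ((q ^ (2 * ((c : ℤ) - (t : ℤ)))) • z c t)) (S (S (z K j))))]
          rw [Finset.sum_comm]
          refine Finset.sum_congr rfl fun t _ => ?_
          rw [Finset.sum_mul]
          refine Finset.sum_congr rfl fun K _ => ?_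
          rw [mul_assoc]
      _ = ∑ t, (if t = j then (1:A) else 0) * ((q ^ (2 * ((c : ℤ) - (t : ℤ)))) • z c t) := by
          refine Finset.sum_congr rfl fun t _ => ?_
          rw [hb t j]
      _ = (q ^ (2 * ((c : ℤ) - (j : ℤ)))) • z c j := by
          rw [Finset.sum_congr rfl (fun t (_ : t ∈ Finset.univ) => show _ =
            if t = j then (q ^ (2 * ((c : ℤ) - (t : ℤ)))) • z c t else 0 from by
              rw [ite_mul, one_mul, zero_mul])]
          rw [Finset.sum_ite_eq' Finset.univ j
            (fun t => (q ^ (2 * ((c : ℤ) - (t : ℤ)))) • z c t)]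
          simp
  -- conclusion
  intro i j
  have h5 : S (z i j) = (q ^ (2 * ((i : ℤ) - (j : ℤ)))) • Sinv (z i j) := by
    calc S (z i j) = Sinv (S (S (z i j))) := (hSinvS _).symm
      _ = Sinv ((q ^ (2 * ((i : ℤ) - (j : ℤ)))) • z i j) := by rw [hSS]
      _ = (q ^ (2 * ((i : ℤ) - (j : ℤ)))) • Sinv (z i j) := hSinv_smul _ _
  rw [h5, smul_smul, ← zpow_add₀ hq]
  have : 2 * ((j : ℤ) - (i : ℤ)) + 2 * ((i : ℤ) - (j : ℤ)) = 0 := by ring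
  rw [this, zpow_zero, one_smul]
end

section
/- In Fun_q(GL(n,ℂ)), the identity Σ_i q^{-2i} S(z^i_l) z^k_i = q^{-2k} δ^k_l holds for all k, l. Consequently the element Tr_q θ = Σ_i q^{2(n-i)} θ^i_i, where θ^i_j = S(z^i_k) dz^k_j, is right-invariant: Δ_R(Tr_q θ) = Tr_q θ ⊗ 1. -/
open scoped TensorProduct

/-- In `Fun_q(GL(n,ℂ))` the identity `Σ_i q^{-2i} S(z i l) z k i = q^{-2k} δ k l` holds;
consequently the quantum trace `Tr_q θ = Σ_i q^{2(n-i)} θ i i` of the Maurer–Cartan forms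
`θ i j` (with `Δ_R(θ i j) = Σ_{m,n'} θ m n' ⊗ S(z i m) z n' j`) is right-invariant:
`Δ_R(Tr_q θ) = (Tr_q θ) ⊗ 1`. -/
theorem quantum_trace_right_invariant (A : Type*) [Ring A] [Algebra ℂ A]
    (n : ℕ) (q : ℂ) (hq : q ≠ 0) (z : Fin n → Fin n → A)
    (S Sinv : A → A)
    (hSadd : ∀ a b : A, S (a + b) = S a + S b)
    (hSsmul : ∀ (c : ℂ) (a : A), S (c • a) = c • S a)
    (hSmul : ∀ a b : A, S (a * b) = S b * S a)
    (hS1 : S 1 = 1)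
    (hSinvS : ∀ a : A, Sinv (S a) = a)
    (hSSinv : ∀ a : A, S (Sinv a) = a)
    (hSinvadd : ∀ a b : A, Sinv (a + b) = Sinv a + Sinv b)
    (hSinvsmul : ∀ (c : ℂ) (a : A), Sinv (c • a) = c • Sinv a)
    (hSinvmul : ∀ a b : A, Sinv (a * b) = Sinv b * Sinv a)
    -- S(Z) Z = Z S(Z) = 1:
    (hSZ1 : ∀ i j : Fin n, ∑ k, S (z i k) * z k j = if i = j then 1 else 0)
    (hSZ2 : ∀ i j : Fin n, ∑ k, z i k * S (z k j) = if i = j then 1 else 0)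
    -- the inverse antipode formula S⁻¹(z i j) = q^{2(j-i)} S(z i j):
    (hSinvz : ∀ i j : Fin n,
        Sinv (z i j) = (q ^ (2 * ((j : ℤ) - (i : ℤ)))) • S (z i j))
    -- the differential calculus data:
    (Γ : Type*) [AddCommGroup Γ] [Module ℂ Γ]
    (θ : Fin n → Fin n → Γ)
    (ΔR : Γ →ₗ[ℂ] Γ ⊗[ℂ] A)
    (hΔθ : ∀ i j : Fin n,
        ΔR (θ i j) = ∑ m, ∑ n', θ m n' ⊗ₜ[ℂ] (S (z i m) * z n' j)) :
    (∀ k l : Fin n,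
        ∑ i : Fin n, (q ^ (-(2 * ((i : ℤ) + 1)))) • (S (z i l) * z k i)
          = (q ^ (-(2 * ((k : ℤ) + 1)))) • (if k = l then (1 : A) else 0)) ∧
      ΔR (∑ i : Fin n, (q ^ (2 * ((n : ℤ) - 1 - (i : ℤ)))) • θ i i)
        = (∑ i : Fin n, (q ^ (2 * ((n : ℤ) - 1 - (i : ℤ)))) • θ i i) ⊗ₜ[ℂ] (1 : A) := by
  classical
  have hSinv0 : Sinv 0 = 0 := by simpa using hSinvsmul 0 0
  have hSinv1 : Sinv 1 = 1 := by
    have := hSinvS 1; rw [hS1] at this; exact this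
  let LSinv : A →ₗ[ℂ] A :=
    { toFun := Sinv, map_add' := hSinvadd, map_smul' := hSinvsmul }
  have key : ∀ k l : Fin n,
      ∑ i : Fin n, (q ^ (-(2 * ((i : ℤ) + 1)))) • (S (z i l) * z k i)
        = (q ^ (-(2 * ((k : ℤ) + 1)))) • (if k = l then (1 : A) else 0) := by
    intro k l
    have h1 := congrArg Sinv (hSZ1 k l)
    have hL : Sinv (∑ j : Fin n, S (z k j) * z j l)
        = ∑ j : Fin n, (q ^ (2 * ((l : ℤ) - (j : ℤ)))) • (S (z j l) * z k j) := by
      rw [show Sinv (∑ j : Fin n, S (z k j) * z j l)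
          = ∑ j : Fin n, Sinv (S (z k j) * z j l) from map_sum LSinv _ _]
      refine Finset.sum_congr rfl fun j _ => ?_
      rw [hSinvmul, hSinvS, hSinvz, smul_mul_assoc]
    have hR : Sinv (if k = l then (1 : A) else 0) = if k = l then (1 : A) else 0 := by
      split <;> simp [hSinv0, hSinv1]
    rw [hL, hR] at h1
    have h2 : ∑ i : Fin n, (q ^ (-(2 * ((i : ℤ) + 1)))) • (S (z i l) * z k i)
        = (q ^ (-(2 * ((l : ℤ) + 1)))) •
            ∑ j : Fin n, (q ^ (2 * ((l : ℤ) - (j : ℤ)))) • (S (z j l) * z k j) := by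
      rw [Finset.smul_sum]
      refine Finset.sum_congr rfl fun j _ => ?_
      rw [smul_smul, ← zpow_add₀ hq]
      congr 1
      ring
    rw [h2, h1]
    by_cases h : k = l
    · subst h; rfl
    · simp [h]
  refine ⟨key, ?_⟩
  have hcollapse : ∀ m i : Fin n,
      ∑ i' : Fin n, (q ^ (2 * ((n : ℤ) - 1 - (i' : ℤ)))) • (S (z i' m) * z i i')
        = (q ^ (2 * ((n : ℤ) - 1 - (i : ℤ)))) • (if i = m then (1 : A) else 0) := by
    intro m i
    have hkey := key i m
    calc ∑ i' : Fin n, (q ^ (2 * ((n : ℤ) - 1 - (i' : ℤ)))) • (S (z i' m) * z i i')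
        = (q ^ (2 * (n : ℤ))) •
            ∑ i' : Fin n, (q ^ (-(2 * ((i' : ℤ) + 1)))) • (S (z i' m) * z i i') := by
          rw [Finset.smul_sum]
          refine Finset.sum_congr rfl fun i' _ => ?_
          rw [smul_smul, ← zpow_add₀ hq]
          congr 1
          ring
      _ = (q ^ (2 * ((n : ℤ) - 1 - (i : ℤ)))) • (if i = m then (1 : A) else 0) := by
          rw [hkey, smul_smul, ← zpow_add₀ hq]
          congr 1
          ring
  calc ΔR (∑ i : Fin n, (q ^ (2 * ((n : ℤ) - 1 - (i : ℤ)))) • θ i i)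
      = ∑ i : Fin n, ∑ m : Fin n, ∑ n' : Fin n,
          (q ^ (2 * ((n : ℤ) - 1 - (i : ℤ)))) • (θ m n' ⊗ₜ[ℂ] (S (z i m) * z n' i)) := by
        rw [map_sum]
        refine Finset.sum_congr rfl fun i _ => ?_
        rw [map_smul, hΔθ, Finset.smul_sum]
        exact Finset.sum_congr rfl fun m _ => Finset.smul_sum
    _ = ∑ m : Fin n, ∑ i : Fin n, ∑ n' : Fin n,
          (q ^ (2 * ((n : ℤ) - 1 - (i : ℤ)))) • (θ m n' ⊗ₜ[ℂ] (S (z i m) * z n' i)) := by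
        exact Finset.sum_comm
    _ = ∑ m : Fin n, ∑ n' : Fin n, ∑ i : Fin n,
          (q ^ (2 * ((n : ℤ) - 1 - (i : ℤ)))) • (θ m n' ⊗ₜ[ℂ] (S (z i m) * z n' i)) := by
        exact Finset.sum_congr rfl fun m _ => Finset.sum_comm
    _ = ∑ m : Fin n, ∑ n' : Fin n, θ m n' ⊗ₜ[ℂ]
          (∑ i : Fin n, (q ^ (2 * ((n : ℤ) - 1 - (i : ℤ)))) • (S (z i m) * z n' i)) := by
        refine Finset.sum_congr rfl fun m _ => Finset.sum_congr rfl fun n' _ => ?_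
        rw [TensorProduct.tmul_sum]
        exact Finset.sum_congr rfl fun i _ => (TensorProduct.tmul_smul _ _ _).symm
    _ = ∑ m : Fin n, ∑ n' : Fin n, θ m n' ⊗ₜ[ℂ]
          ((q ^ (2 * ((n : ℤ) - 1 - (n' : ℤ)))) • (if n' = m then (1 : A) else 0)) := by
        refine Finset.sum_congr rfl fun m _ => Finset.sum_congr rfl fun n' _ => ?_
        rw [hcollapse m n']
    _ = (∑ i : Fin n, (q ^ (2 * ((n : ℤ) - 1 - (i : ℤ)))) • θ i i) ⊗ₜ[ℂ] (1 : A) := by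
        rw [Finset.sum_comm, TensorProduct.sum_tmul]
        refine Finset.sum_congr rfl fun n' _ => ?_
        rw [Finset.sum_eq_single n']
        · simp [TensorProduct.smul_tmul']
        · intro m _ hm
          simp [Ne.symm hm]
        · intro h
          exact absurd (Finset.mem_univ n') h
end
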